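/- arXiv:2203.06992 — 6 statements merged into one kernel-verified Lean document; each statement's English description precedes it below -/
import Mathlib

section
/- Let X be a finite set, and let A_1,...,A_k and B_1,...,B_k be two partitions of X with |A_i| = |B_i| for every i. Define a directed graph G on nodes {1,...,k} with an edge (i,j) if and only if A_i ∩ B_j is nonempty. Then whenever (i,j) is an edge of G, there exists a directed path in G from j to i. -/
/-!
Let `S` be the set of nodes reachable from `j`. Every element of `⋃_{p ∈ S} A p` lies in some
`B q` with `q` reachable through the edge `(p, q)`, so `⋃_{p ∈ S} A p ⊆ ⋃_{p ∈ S} B p`; the left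
side is a disjoint union, so comparing cardinalities forces equality. An element of `A i ∩ B j`
then lies in `A p` for some `p ∈ S`, and `p = i` because the `A`'s are disjoint.
-/

open Function

section

variable {X ι : Type*}

lemma pairwise_disjoint_of_existsUnique_mem {A : ι → Finset X} (hA : ∀ x, ∃! i, x ∈ A i) :
    Pairwise (Disjoint on A) := fun _ _ hpq =>
  Finset.disjoint_left.2 fun x hxp hxq => hpq ((hA x).unique hxp hxq)

lemma biUnion_eq_of_forall_nonempty_inter_mem [DecidableEq X] {A B : ι → Finset X}
    (hA : Pairwise (Disjoint on A)) (hB : ∀ x, ∃ i, x ∈ B i)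
    (hcard : ∀ i, (A i).card = (B i).card) {S : Finset ι}
    (hS : ∀ p ∈ S, ∀ q, (A p ∩ B q).Nonempty → q ∈ S) :
    S.biUnion A = S.biUnion B := by
  have hsub : S.biUnion A ⊆ S.biUnion B := by
    intro x hx
    obtain ⟨p, hp, hxp⟩ := Finset.mem_biUnion.1 hx
    obtain ⟨q, hxq⟩ := hB x
    exact Finset.mem_biUnion.2 ⟨q, hS p hp q ⟨x, Finset.mem_inter.2 ⟨hxp, hxq⟩⟩, hxq⟩
  refine Finset.eq_of_subset_of_card_le hsub ?_
  calc (S.biUnion B).card ≤ ∑ p ∈ S, (B p).card := Finset.card_biUnion_le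
    _ = ∑ p ∈ S, (A p).card := Finset.sum_congr rfl fun p _ => (hcard p).symm
    _ = (S.biUnion A).card := (Finset.card_biUnion fun p _ q _ hpq => hA hpq).symm

end

theorem stmt0_general {X : Type*} [DecidableEq X] {k : ℕ}
    (A B : Fin k → Finset X)
    (hA : ∀ x : X, ∃! i, x ∈ A i)
    (hB : ∀ x : X, ∃! i, x ∈ B i)
    (hcard : ∀ i, (A i).card = (B i).card)
    (i j : Fin k) (hij : (A i ∩ B j).Nonempty) :
    Relation.ReflTransGen (fun p q : Fin k => (A p ∩ B q).Nonempty) j i := by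
  classical
  set R := fun p q : Fin k => (A p ∩ B q).Nonempty
  set S := Finset.univ.filter (Relation.ReflTransGen R j)
  have hmem : ∀ p, p ∈ S ↔ Relation.ReflTransGen R j p := by simp [S]
  have hunion : S.biUnion A = S.biUnion B :=
    biUnion_eq_of_forall_nonempty_inter_mem (pairwise_disjoint_of_existsUnique_mem hA)
      (fun x => (hB x).exists) hcard
      fun p hp q hpq => (hmem q).2 (((hmem p).1 hp).tail hpq)
  obtain ⟨x, hx⟩ := hij
  obtain ⟨hxi, hxj⟩ := Finset.mem_inter.1 hx
  have hxA : x ∈ S.biUnion A := hunion ▸ Finset.mem_biUnion.2 ⟨j, (hmem j).2 .refl, hxj⟩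
  obtain ⟨p, hp, hxp⟩ := Finset.mem_biUnion.1 hxA
  exact (hA x).unique hxp hxi ▸ (hmem p).1 hp

/-- Given two partitions `A`, `B` of a finite set `X` into `k` parts of
equal cardinalities, in the directed graph with edge `(i,j)` iff `A i ∩ B j ≠ ∅`,
every edge `(i,j)` admits a directed path back from `j` to `i`. -/
theorem stmt0 {X : Type*} [Fintype X] [DecidableEq X] {k : ℕ}
    (A B : Fin k → Finset X)
    (hA : ∀ x : X, ∃! i, x ∈ A i)
    (hB : ∀ x : X, ∃! i, x ∈ B i)
    (hcard : ∀ i, (A i).card = (B i).card)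
    (i j : Fin k) (hij : (A i ∩ B j).Nonempty) :
    Relation.ReflTransGen (fun p q : Fin k => (A p ∩ B q).Nonempty) j i :=
  stmt0_general A B hA hB hcard i j hij
end

section
/- Suppose G_n = {ξ_{i,n}}_{i=1,...,d_n} is an asymptotically uniform grid on [0,1] with d_n → ∞, i.e., max_{i=1,...,d_n} |ξ_{i,n} − i/d_n| → 0 where the points are sorted increasingly. If G'_n = {ξ'_{i,n}}_{i=1,...,d'_n} is another family of grids on [0,1] such that the cardinality of the symmetric difference |G_n △ G'_n| = o(d_n), then G'_n is also an asymptotically uniform grid on [0,1], i.e., max_{j=1,...,d'_n} |ξ'_{j,n} − j/d'_n| → 0. -/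
open Filter Topology

/-!
If every point of a grid of `k` points lies within `ε` of its uniform position, then its counting
function `x ↦ #{i | ξ i ≤ x}` stays within `k ε + 1` of `k x` on `[0, 1]`. Changing the grid by
`s` points moves the counting function and the number of points by at most `s` each, and the
`j`-th point of the new grid is where its own counting function reaches `j + 1`; together this
puts that point within `ε + (2 s + 1) / k` of `(j + 1) / k'`.
-/

namespace Finset

variable {α : Type*} [DecidableEq α]

lemma card_filter_le_card_symmDiff_add_card_filter (s t : Finset α) (p : α → Prop)
    [DecidablePred p] : #(s.filter p) ≤ #(symmDiff s t) + #(t.filter p) :=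
  card_le_card_sdiff_add_card.trans <| Nat.add_le_add_right (card_le_card fun a ha => by
    simp only [mem_sdiff, mem_filter, not_and] at ha
    exact mem_symmDiff.2 (Or.inl ⟨ha.1.1, fun h => ha.2 h ha.1.2⟩)) _

lemma abs_card_filter_sub_card_filter_le (s t : Finset α) (p : α → Prop) [DecidablePred p] :
    |(#(s.filter p) : ℝ) - #(t.filter p)| ≤ #(symmDiff s t) := by
  have h₁ := card_filter_le_card_symmDiff_add_card_filter s t p
  have h₂ := card_filter_le_card_symmDiff_add_card_filter t s p
  rw [symmDiff_comm] at h₂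
  rw [abs_sub_le_iff, sub_le_iff_le_add, sub_le_iff_le_add]
  exact ⟨by exact_mod_cast h₁, by exact_mod_cast h₂⟩

lemma abs_card_sub_card_le (s t : Finset α) : |(#s : ℝ) - #t| ≤ #(symmDiff s t) := by
  simpa using abs_card_filter_sub_card_filter_le s t (fun _ => True)

end Finset

open Finset

lemma abs_sub_card_filter_div_le {k : ℕ} (hk : 0 < k) {f : Fin k → ℝ} {ε : ℝ}
    (hε : ∀ i, |f i - ((i : ℕ) + 1) / k| ≤ ε) {x : ℝ} (hx : x ∈ Set.Icc (0 : ℝ) 1) :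
    |x - #{i | f i ≤ x} / k| ≤ ε + 1 / k := by
  -- Compare `x` with `f` at the largest index in `S` and at an index `≤ #S` outside `S`.
  set S : Finset (Fin k) := {i | f i ≤ x}
  have hkR : (0 : ℝ) < k := by exact_mod_cast hk
  have hε0 : 0 ≤ ε := (abs_nonneg _).trans (hε ⟨0, hk⟩)
  have hk1 : (0 : ℝ) ≤ 1 / k := by positivity
  have hlower : #S / k - ε ≤ x := by
    rcases S.eq_empty_or_nonempty with hS | hS
    · rw [hS, card_empty, Nat.cast_zero, zero_div]
      linarith [hx.1]
    have hm : f (S.max' hS) ≤ x := (mem_filter.1 (S.max'_mem hS)).2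
    have hSm : #S ≤ (S.max' hS : ℕ) + 1 := by
      simpa using card_le_card fun i hi => mem_Iic.2 (S.le_max' i hi)
    have := (abs_le.1 (hε (S.max' hS))).1
    have : (#S : ℝ) / k ≤ ((S.max' hS : ℕ) + 1) / k := by gcongr; exact_mod_cast hSm
    linarith
  have hupper : x ≤ (#S + 1) / k + ε := by
    rcases lt_or_ge #S k with hSk | hSk
    · obtain ⟨i, hiN, hiS⟩ := exists_mem_notMem_of_card_lt_card
        (s := S) (t := Iic ⟨#S, hSk⟩) (by simp)
      have hxi : x < f i := by simpa [S] using hiS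
      have := (abs_le.1 (hε i)).2
      have : ((i : ℕ) + 1 : ℝ) / k ≤ (#S + 1) / k := by
        gcongr; exact_mod_cast mem_Iic.1 hiN
      linarith
    · have : (1 : ℝ) ≤ (#S + 1) / k := by
        rw [le_div_iff₀ hkR, one_mul]; exact_mod_cast hSk.trans (Nat.le_succ _)
      linarith [hx.2]
  rw [add_div] at hupper
  rw [abs_le]
  constructor <;> linarith

lemma abs_div_sub_div_le {a b K K' s : ℝ} (hK : 0 < K) (hK' : 0 < K') (hb : 0 ≤ b)
    (hbK' : b ≤ K') (hab : |a - b| ≤ s) (hKK' : |K - K'| ≤ s) :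
    |a / K - b / K'| ≤ 2 * (s / K) := by
  have hsplit : a / K - b / K' = (a - b) / K + b / K' * ((K' - K) / K) := by
    field_simp; ring
  have hbK'1 : |b / K'| ≤ 1 := by
    rw [abs_of_nonneg (by positivity)]; exact (div_le_one hK').2 hbK'
  calc |a / K - b / K'| ≤ |a - b| / K + |b / K'| * (|K - K'| / K) := by
        rw [hsplit, abs_sub_comm K]
        refine (abs_add_le _ _).trans_eq ?_
        rw [abs_mul, abs_div, abs_div (K' - K), abs_of_pos hK]
    _ ≤ s / K + 1 * (s / K) := by gcongr
    _ = 2 * (s / K) := by ring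

lemma abs_sub_div_le_of_card_symmDiff {k k' : ℕ} (hk : 0 < k) {f : Fin k → ℝ} {g : Fin k' → ℝ}
    (hf : Function.Injective f) (hg : StrictMono g) (hg01 : ∀ j, g j ∈ Set.Icc (0 : ℝ) 1)
    {ε : ℝ} (hε : ∀ i, |f i - ((i : ℕ) + 1) / k| ≤ ε) (j : Fin k') :
    |g j - ((j : ℕ) + 1) / k'| ≤
      ε + 1 / k + 2 * (#(symmDiff (image f univ) (image g univ)) / k) := by
  set x := g j
  set N : ℕ := #{i | f i ≤ x}
  have hN : #((image f univ).filter (· ≤ x)) = N := by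
    rw [filter_image, card_image_of_injective _ hf]
  have hj : #((image g univ).filter (· ≤ x)) = (j : ℕ) + 1 := by
    rw [filter_image, card_image_of_injective _ hg.injective, ← Fin.card_Iic j]
    congr 1
    ext a
    simp [x, hg.le_iff_le]
  have hcount := abs_card_filter_sub_card_filter_le (image f univ) (image g univ) (· ≤ x)
  have hcard := abs_card_sub_card_le (image f univ) (image g univ)
  rw [hN, hj] at hcount
  rw [card_image_of_injective _ hf, card_image_of_injective _ hg.injective, card_univ,
    card_univ, Fintype.card_fin, Fintype.card_fin] at hcard
  have hk' : (0 : ℝ) < k' := by exact_mod_cast j.pos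
  calc |x - ((j : ℕ) + 1) / k'| ≤ |x - N / k| + |(N : ℝ) / k - ((j : ℕ) + 1) / k'| :=
        abs_sub_le _ _ _
    _ ≤ ε + 1 / k + 2 * (#(symmDiff (image f univ) (image g univ)) / k) := by
        gcongr
        · exact abs_sub_card_filter_div_le hk hε (hg01 j)
        · refine abs_div_sub_div_le (by exact_mod_cast hk) hk' (by positivity) ?_ ?_ hcard
          · exact_mod_cast j.isLt
          · push_cast at hcount; exact hcount

theorem stmt1_general (d d' : ℕ → ℕ)
    (ξ : ∀ n, Fin (d n) → ℝ) (ξ' : ∀ n, Fin (d' n) → ℝ)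
    (hd : Tendsto d atTop atTop)
    (hsort : ∀ n, StrictMono (ξ n)) (hsort' : ∀ n, StrictMono (ξ' n))
    (hmem' : ∀ n j, ξ' n j ∈ Set.Icc (0:ℝ) 1)
    (hau : Tendsto (fun n => ⨆ i : Fin (d n), |ξ n i - ((i : ℕ) + 1) / (d n)|)
      atTop (𝓝 0))
    (hsd : Tendsto (fun n =>
      ((symmDiff (Finset.image (ξ n) Finset.univ) (Finset.image (ξ' n) Finset.univ)).card : ℝ)
        / (d n)) atTop (𝓝 0)) :
    Tendsto (fun n => ⨆ j : Fin (d' n), |ξ' n j - ((j : ℕ) + 1) / (d' n)|)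
      atTop (𝓝 0) := by
  have hbound := (hau.add (tendsto_one_div_atTop_nhds_zero_nat.comp hd)).add (hsd.const_mul 2)
  simp only [add_zero, mul_zero, Function.comp_def] at hbound
  refine squeeze_zero' (.of_forall fun n => Real.iSup_nonneg fun j => abs_nonneg _) ?_ hbound
  filter_upwards [hd.eventually_gt_atTop 0] with n hn
  have hε : ∀ i, |ξ n i - ((i : ℕ) + 1) / (d n)| ≤
      ⨆ i : Fin (d n), |ξ n i - ((i : ℕ) + 1) / (d n)| :=
    le_ciSup (Set.finite_range _).bddAbove
  have hε0 := Real.iSup_nonneg fun i : Fin (d n) => abs_nonneg (ξ n i - ((i : ℕ) + 1) / (d n))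
  exact Real.iSup_le (abs_sub_div_le_of_card_symmDiff hn (hsort n).injective (hsort' n)
    (hmem' n) hε) (by positivity)

/-- If `G_n` is an asymptotically uniform grid on `[0,1]` with `d_n → ∞`
and `G'_n` differs from it by `o(d_n)` elements (symmetric difference), then `G'_n`
is an asymptotically uniform grid on `[0,1]`. -/
theorem stmt1 (d d' : ℕ → ℕ)
    (ξ : ∀ n, Fin (d n) → ℝ) (ξ' : ∀ n, Fin (d' n) → ℝ)
    (hd : Tendsto d atTop atTop)
    (hsort : ∀ n, StrictMono (ξ n)) (hsort' : ∀ n, StrictMono (ξ' n))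
    (hmem : ∀ n i, ξ n i ∈ Set.Icc (0:ℝ) 1)
    (hmem' : ∀ n j, ξ' n j ∈ Set.Icc (0:ℝ) 1)
    (hau : Tendsto (fun n => ⨆ i : Fin (d n), |ξ n i - ((i : ℕ) + 1) / (d n)|)
      atTop (𝓝 0))
    (hsd : Tendsto (fun n =>
      ((symmDiff (Finset.image (ξ n) Finset.univ) (Finset.image (ξ' n) Finset.univ)).card : ℝ)
        / (d n)) atTop (𝓝 0)) :
    Tendsto (fun n => ⨆ j : Fin (d' n), |ξ' n j - ((j : ℕ) + 1) / (d' n)|)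
      atTop (𝓝 0) :=
  stmt1_general d d' ξ ξ' hd hsort hsort' hmem' hau hsd
end

section
/- Suppose G^1_n and G^2_n are two asymptotically uniform grids on [0,1] with cardinalities d^1_n, d^2_n → ∞ satisfying d^j_n/n → 1/2 for j = 1,2, where n = d^1_n + d^2_n. Then the union G^1_n ∪ G^2_n (counted with multiplicity, sorted increasingly) is an asymptotically uniform grid on [0,1]. -/
/-!
A grid `f : Fin d → ℝ` within `ε` of the ideal grid `(i + 1) / d` has counting function
`t ↦ #{i | f i ≤ t}` within `d ε + 1` of `d t`. Counting functions add when two grids are merged,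
so the merged grid of size `N` has counting function within `N ε + 2` of `N t`, with `ε` the larger
of the two deviations. Since the rank `j` of `t = η j` lies between `#{η < t}` and `#{η ≤ t} - 1`,
this gives `|η j - (j + 1) / N| ≤ ε + 1 / N`.
-/

open Filter Topology Finset

noncomputable def gridDeviation {d : ℕ} (f : Fin d → ℝ) : ℝ :=
  ⨆ i : Fin d, |f i - ((i : ℕ) + 1) / d|

lemma abs_sub_le_gridDeviation {d : ℕ} (f : Fin d → ℝ) (i : Fin d) :
    |f i - ((i : ℕ) + 1) / d| ≤ gridDeviation f :=
  le_ciSup (f := fun i : Fin d => |f i - ((i : ℕ) + 1) / d|) (Finite.bddAbove_range _) i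

lemma gridDeviation_nonneg {d : ℕ} (f : Fin d → ℝ) : 0 ≤ gridDeviation f :=
  Real.iSup_nonneg fun _ => abs_nonneg _

lemma card_filter_add_one_le_le (d : ℕ) {x : ℝ} (hx : 0 ≤ x) :
    (#{i : Fin d | ((i : ℕ) : ℝ) + 1 ≤ x} : ℝ) ≤ x :=
  calc (#{i : Fin d | ((i : ℕ) : ℝ) + 1 ≤ x} : ℝ) ≤ #{i : Fin d | (i : ℕ) < ⌊x⌋₊} := by
        refine Nat.cast_le.2 (card_le_card fun i hi => ?_)
        rw [mem_filter] at hi ⊢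
        exact ⟨hi.1, Nat.le_floor (by exact_mod_cast hi.2)⟩
    _ ≤ ⌊x⌋₊ := by rw [Fin.card_filter_val_lt]; exact_mod_cast min_le_right _ _
    _ ≤ x := Nat.floor_le hx

lemma sub_one_le_card_filter_add_one_lt {d : ℕ} {x : ℝ} (hx : x ≤ d + 1) :
    x - 1 ≤ #{i : Fin d | ((i : ℕ) : ℝ) + 1 < x} := by
  have hcongr : #{i : Fin d | ((i : ℕ) : ℝ) + 1 < x} = #{i : Fin d | (i : ℕ) < ⌈x - 1⌉₊} := by
    congr 1
    refine filter_congr fun i _ => ?_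
    rw [Nat.lt_ceil, lt_sub_iff_add_lt]
  rw [hcongr, Fin.card_filter_val_lt, Nat.cast_min]
  exact le_min (by linarith) (Nat.le_ceil _)

section PerturbedGrid

variable {d : ℕ} {f : Fin d → ℝ} {ε : ℝ}

lemma card_filter_le_le_mul (hf : ∀ i, |f i - ((i : ℕ) + 1) / d| ≤ ε) {t : ℝ}
    (ht : 0 ≤ t + ε) : (#{i | f i ≤ t} : ℝ) ≤ d * (t + ε) := by
  refine le_trans (Nat.cast_le.2 (card_le_card fun i hi => ?_))
    (card_filter_add_one_le_le d (x := d * (t + ε)) (by positivity))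
  rw [mem_filter] at hi ⊢
  have hd : (0 : ℝ) < d := by exact_mod_cast i.pos
  have hi' : ((i : ℕ) + 1 : ℝ) / d ≤ t + ε := by linarith [(abs_le.1 (hf i)).1, hi.2]
  exact ⟨hi.1, by rwa [div_le_iff₀ hd, mul_comm] at hi'⟩

lemma mul_sub_sub_one_le_card_filter_lt (hf : ∀ i, |f i - ((i : ℕ) + 1) / d| ≤ ε) {t : ℝ}
    (ht : t - ε ≤ 1) : d * (t - ε) - 1 ≤ #{i | f i < t} := by
  have hx : d * (t - ε) ≤ d + 1 := by nlinarith [(Nat.cast_nonneg d : (0 : ℝ) ≤ d)]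
  refine le_trans (sub_one_le_card_filter_add_one_lt hx)
    (Nat.cast_le.2 (card_le_card fun i hi => ?_))
  rw [mem_filter] at hi ⊢
  have hd : (0 : ℝ) < d := by exact_mod_cast i.pos
  have hi' : ((i : ℕ) + 1 : ℝ) / d < t - ε := by rw [div_lt_iff₀ hd, mul_comm]; exact hi.2
  exact ⟨hi.1, by linarith [(abs_le.1 (hf i)).2]⟩

end PerturbedGrid

section Rank

variable {n : ℕ} {α : Type*} [LinearOrder α] {η : Fin n → α}

lemma Monotone.add_one_le_card_filter_le (hη : Monotone η) (j : Fin n) :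
    (j : ℕ) + 1 ≤ #{i | η i ≤ η j} :=
  calc (j : ℕ) + 1 = #(Iic j) := (Fin.card_Iic j).symm
    _ ≤ #{i | η i ≤ η j} := card_le_card fun _ hi => mem_filter.2 ⟨mem_univ _, hη (mem_Iic.1 hi)⟩

lemma Monotone.card_filter_lt_le (hη : Monotone η) (j : Fin n) :
    #{i | η i < η j} ≤ j :=
  calc #{i | η i < η j} ≤ #(Iio j) := card_le_card fun _ hi =>
        mem_Iio.2 (lt_of_not_ge fun hji => (hη hji).not_gt (mem_filter.1 hi).2)
    _ = j := Fin.card_Iio j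

end Rank

lemma card_filter_eq_countP_ofFn {n : ℕ} {α : Type*} (f : Fin n → α) (p : α → Prop)
    [DecidablePred p] : #{i | p (f i)} = Multiset.countP p (List.ofFn f : Multiset α) := by
  rw [← Fin.univ_val_map, Multiset.countP_map]
  rfl

lemma List.Perm.card_filter_ofFn_eq_add {a b : ℕ} {α : Type*} {f : Fin a → α} {g : Fin b → α}
    {η : Fin (a + b) → α} (hperm : (List.ofFn η).Perm (List.ofFn f ++ List.ofFn g))
    (p : α → Prop) [DecidablePred p] :
    #{j | p (η j)} = #{i | p (f i)} + #{i | p (g i)} := by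
  simp only [card_filter_eq_countP_ofFn, Multiset.coe_eq_coe.2 hperm, ← Multiset.coe_add,
    Multiset.countP_add]

theorem gridDeviation_le_of_perm_append {a b : ℕ} {f : Fin a → ℝ} {g : Fin b → ℝ}
    {η : Fin (a + b) → ℝ} (hf : ∀ i, f i ∈ Set.Icc (0 : ℝ) 1) (hg : ∀ i, g i ∈ Set.Icc (0 : ℝ) 1)
    (hη : Monotone η) (hperm : (List.ofFn η).Perm (List.ofFn f ++ List.ofFn g)) :
    gridDeviation η ≤ max (gridDeviation f) (gridDeviation g) + 1 / (a + b : ℕ) := by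
  set ε := max (gridDeviation f) (gridDeviation g)
  have hε : 0 ≤ ε := le_max_of_le_left (gridDeviation_nonneg f)
  have hf' i : |f i - ((i : ℕ) + 1) / a| ≤ ε :=
    (abs_sub_le_gridDeviation f i).trans (le_max_left _ _)
  have hg' i : |g i - ((i : ℕ) + 1) / b| ≤ ε :=
    (abs_sub_le_gridDeviation g i).trans (le_max_right _ _)
  rcases isEmpty_or_nonempty (Fin (a + b)) with hempty | hne
  · rw [gridDeviation, Real.iSup_of_isEmpty]
    positivity
  refine ciSup_le fun j => ?_
  have ht : η j ∈ Set.Icc (0 : ℝ) 1 := by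
    rcases List.mem_append.1 (hperm.mem_iff.1 (List.mem_ofFn.2 ⟨j, rfl⟩)) with h | h
    · obtain ⟨i, hi⟩ := List.mem_ofFn.1 h
      exact hi ▸ hf i
    · obtain ⟨i, hi⟩ := List.mem_ofFn.1 h
      exact hi ▸ hg i
  set t := η j
  have hN : (0 : ℝ) < a + b := by exact_mod_cast j.pos
  have hupper : (j : ℝ) + 1 ≤ (a + b) * (t + ε) := by
    have hj : ((j : ℕ) + 1 : ℝ) ≤ #{i | f i ≤ t} + #{i | g i ≤ t} := by
      exact_mod_cast (hη.add_one_le_card_filter_le j).trans_eq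
        (hperm.card_filter_ofFn_eq_add (· ≤ t))
    linear_combination hj + card_filter_le_le_mul hf' (t := t) (by linarith [ht.1])
      + card_filter_le_le_mul hg' (t := t) (by linarith [ht.1])
  have hlower : (a + b) * (t - ε) ≤ (j : ℝ) + 1 + 1 := by
    have hj : (#{i | f i < t} + #{i | g i < t} : ℝ) ≤ (j : ℕ) := by
      exact_mod_cast (hperm.card_filter_ofFn_eq_add (· < t)).symm.trans_le
        (hη.card_filter_lt_le j)
    linear_combination hj + mul_sub_sub_one_le_card_filter_lt hf' (t := t) (by linarith [ht.2])
      + mul_sub_sub_one_le_card_filter_lt hg' (t := t) (by linarith [ht.2])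
  have hscaled : |(a + b) * t - ((j : ℕ) + 1)| ≤ (a + b) * ε + 1 :=
    abs_sub_le_iff.2 ⟨by linarith, by linarith⟩
  rw [Nat.cast_add]
  calc |t - ((j : ℕ) + 1) / (a + b)| = |(a + b) * t - ((j : ℕ) + 1)| / (a + b) := by
        rw [← abs_of_pos hN, ← abs_div, abs_of_pos hN]
        congr 1
        field_simp
    _ ≤ ((a + b) * ε + 1) / (a + b) := by gcongr
    _ = ε + 1 / (a + b) := by field_simp

theorem stmt2_general (d1 d2 : ℕ → ℕ)
    (ξ1 : ∀ n, Fin (d1 n) → ℝ) (ξ2 : ∀ n, Fin (d2 n) → ℝ)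
    (η : ∀ n, Fin (d1 n + d2 n) → ℝ)
    (hd1 : Tendsto d1 atTop atTop)
    (hmem1 : ∀ n i, ξ1 n i ∈ Set.Icc (0:ℝ) 1)
    (hmem2 : ∀ n i, ξ2 n i ∈ Set.Icc (0:ℝ) 1)
    (hau1 : Tendsto (fun n => ⨆ i : Fin (d1 n), |ξ1 n i - ((i : ℕ) + 1) / (d1 n)|)
      atTop (𝓝 0))
    (hau2 : Tendsto (fun n => ⨆ i : Fin (d2 n), |ξ2 n i - ((i : ℕ) + 1) / (d2 n)|)
      atTop (𝓝 0))
    (hηmono : ∀ n, Monotone (η n))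
    (hperm : ∀ n, (List.ofFn (η n)).Perm (List.ofFn (ξ1 n) ++ List.ofFn (ξ2 n))) :
    Tendsto (fun n => ⨆ j : Fin (d1 n + d2 n),
      |η n j - ((j : ℕ) + 1) / ((d1 n : ℝ) + (d2 n : ℝ))|) atTop (𝓝 0) := by
  have hN : Tendsto (fun n => ((d1 n + d2 n : ℕ) : ℝ)) atTop atTop :=
    tendsto_natCast_atTop_atTop.comp (tendsto_atTop_mono (fun n => Nat.le_add_right _ _) hd1)
  have hbound : Tendsto (fun n => max (gridDeviation (ξ1 n)) (gridDeviation (ξ2 n))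
      + 1 / ((d1 n + d2 n : ℕ) : ℝ)) atTop (𝓝 0) := by
    simpa only [max_self, one_div, add_zero, Pi.inv_apply, gridDeviation] using (hau1.max hau2).add hN.inv_tendsto_atTop
  simp only [← Nat.cast_add]
  exact squeeze_zero (fun n => gridDeviation_nonneg _)
    (fun n => gridDeviation_le_of_perm_append (hmem1 n) (hmem2 n) (hηmono n) (hperm n)) hbound

/-- The union (with multiplicity, sorted increasingly) of two
asymptotically uniform grids on `[0,1]` whose cardinalities are both asymptotically
half of the total is again an asymptotically uniform grid on `[0,1]`. -/
theorem stmt2 (d1 d2 : ℕ → ℕ)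
    (ξ1 : ∀ n, Fin (d1 n) → ℝ) (ξ2 : ∀ n, Fin (d2 n) → ℝ)
    (η : ∀ n, Fin (d1 n + d2 n) → ℝ)
    (hd1 : Tendsto d1 atTop atTop) (hd2 : Tendsto d2 atTop atTop)
    (hmem1 : ∀ n i, ξ1 n i ∈ Set.Icc (0:ℝ) 1)
    (hmem2 : ∀ n i, ξ2 n i ∈ Set.Icc (0:ℝ) 1)
    (hsort1 : ∀ n, StrictMono (ξ1 n)) (hsort2 : ∀ n, StrictMono (ξ2 n))
    (hhalf1 : Tendsto (fun n => (d1 n : ℝ) / ((d1 n : ℝ) + (d2 n : ℝ))) atTop (𝓝 (1/2)))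
    (hhalf2 : Tendsto (fun n => (d2 n : ℝ) / ((d1 n : ℝ) + (d2 n : ℝ))) atTop (𝓝 (1/2)))
    (hau1 : Tendsto (fun n => ⨆ i : Fin (d1 n), |ξ1 n i - ((i : ℕ) + 1) / (d1 n)|)
      atTop (𝓝 0))
    (hau2 : Tendsto (fun n => ⨆ i : Fin (d2 n), |ξ2 n i - ((i : ℕ) + 1) / (d2 n)|)
      atTop (𝓝 0))
    (hηmono : ∀ n, Monotone (η n))
    (hperm : ∀ n, (List.ofFn (η n)).Perm (List.ofFn (ξ1 n) ++ List.ofFn (ξ2 n))) :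
    Tendsto (fun n => ⨆ j : Fin (d1 n + d2 n),
      |η n j - ((j : ℕ) + 1) / ((d1 n : ℝ) + (d2 n : ℝ))|) atTop (𝓝 0) :=
  stmt2_general d1 d2 ξ1 ξ2 η hd1 hmem1 hmem2 hau1 hau2 hηmono hperm
end

section
/- Let T be a real symmetric n×n matrix that is centrosymmetric, i.e., Y_n T Y_n = T where Y_n is the flip matrix. Then there exists an orthonormal basis of ℝ^n consisting of eigenvectors of T such that ⌈n/2⌉ of the basis vectors are symmetric (Y_n v = v) and the other ⌊n/2⌋ are skew-symmetric (Y_n v = −v). -/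
/-!
The flip `Y` is a symmetric involution, so `ℝⁿ` is the orthogonal sum of its eigenspaces
for `1` (symmetric vectors) and `-1` (skew-symmetric vectors). A vector in either eigenspace is
determined by its first half of coordinates, which bounds their dimensions by `⌈n/2⌉` and
`⌊n/2⌋`; as they span `ℝⁿ`, these bounds are equalities. Centrosymmetry says that `T` commutes
with `Y`, so both eigenspaces are `T`-invariant, and the spectral theorem for the restrictions of
`T` yields orthonormal eigenbases of each, which together form the required basis.
-/

open Matrix

/-- The `n×n` flip (anti-identity) matrix. -/
def flipMatrix (n : ℕ) : Matrix (Fin n) (Fin n) ℝ :=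
  Matrix.of fun i j => if (i : ℕ) + (j : ℕ) + 2 = n + 1 then 1 else 0

open Module Module.End WithLp InnerProductSpace

section General

variable {𝕜 E ι κ : Type*} [RCLike 𝕜] [NormedAddCommGroup E] [InnerProductSpace 𝕜 E]

theorem Orthonormal.sumElim {u : ι → E} {w : κ → E} (hu : Orthonormal 𝕜 u)
    (hw : Orthonormal 𝕜 w) (huw : ∀ i j, ⟪u i, w j⟫_𝕜 = 0) : Orthonormal 𝕜 (Sum.elim u w) := by
  classical
  rw [orthonormal_iff_ite] at hu hw ⊢
  rintro (i | i) (j | j) <;> simp [hu, hw, huw, inner_eq_zero_symm]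

theorem LinearMap.IsSymmetric.exists_orthonormal_eigenvectors_sum [FiniteDimensional 𝕜 E]
    {T : E →ₗ[𝕜] E} (hT : T.IsSymmetric) {U W : Submodule 𝕜 E} (hUW : U ⟂ W)
    (hU : ∀ x ∈ U, T x ∈ U) (hW : ∀ x ∈ W, T x ∈ W) {p q : ℕ}
    (hp : finrank 𝕜 U = p) (hq : finrank 𝕜 W = q) :
    ∃ (v : Fin p ⊕ Fin q → E) (μ : Fin p ⊕ Fin q → ℝ), Orthonormal 𝕜 v ∧
      (∀ i, T (v i) = (μ i : 𝕜) • v i) ∧ (∀ k, v (.inl k) ∈ U) ∧ ∀ k, v (.inr k) ∈ W := by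
  have hTU := hT.restrict_invariant hU
  have hTW := hT.restrict_invariant hW
  refine ⟨Sum.elim (fun k => hTU.eigenvectorBasis hp k) (fun k => hTW.eigenvectorBasis hq k),
    Sum.elim (hTU.eigenvalues hp) (hTW.eigenvalues hq), ?_, ?_, fun k => by simp,
    fun k => by simp⟩
  · exact ((hTU.eigenvectorBasis hp).orthonormal.comp_linearIsometry U.subtypeₗᵢ).sumElim
      ((hTW.eigenvectorBasis hq).orthonormal.comp_linearIsometry W.subtypeₗᵢ)
      fun i j => hUW.inner_eq (Submodule.coe_mem _) (Submodule.coe_mem _)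
  · rintro (k | k)
    · exact congrArg Subtype.val (hTU.apply_eigenvectorBasis hp k)
    · exact congrArg Subtype.val (hTW.apply_eigenvectorBasis hq k)

theorem Module.End.eigenspace_one_sup_eigenspace_neg_one {K V : Type*} [Field K]
    [NeZero (2 : K)] [AddCommGroup V] [Module K V] {f : End K V} (hf : f * f = 1) :
    eigenspace f 1 ⊔ eigenspace f (-1) = ⊤ := by
  have hff (y : V) : f (f y) = y := by simpa using LinearMap.congr_fun hf y
  refine eq_top_iff.mpr fun x _ => Submodule.mem_sup.mpr
    ⟨(2 : K)⁻¹ • (x + f x), ?_, (2 : K)⁻¹ • (x - f x), ?_, ?_⟩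
  · simp [hff, add_comm]
  · simp [hff, ← smul_neg]
  · rw [← smul_add, add_add_sub_cancel, ← two_smul K, smul_smul, inv_mul_cancel₀ two_ne_zero,
      one_smul]

theorem Submodule.finrank_le_card_of_forall_apply_eq_zero [Fintype ι] [Fintype κ]
    (V : Submodule 𝕜 (EuclideanSpace 𝕜 ι)) (e : κ → ι)
    (h : ∀ x ∈ V, (∀ k, x (e k) = 0) → x = 0) : finrank 𝕜 V ≤ Fintype.card κ := by
  let f : V →ₗ[𝕜] κ → 𝕜 :=
    LinearMap.funLeft 𝕜 𝕜 e ∘ₗ (WithLp.linearEquiv 2 𝕜 (ι → 𝕜)).toLinearMap ∘ₗ V.subtype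
  have hf : Function.Injective f :=
    (injective_iff_map_eq_zero f).mpr fun x hx => Subtype.ext (h x x.2 fun k => congrFun hx k)
  simpa using LinearMap.finrank_le_finrank_of_injective hf

theorem Matrix.mulVec_ofLp_eq_smul_of_mem_eigenspace [Fintype ι] [DecidableEq ι]
    {A : Matrix ι ι 𝕜} {μ : 𝕜} {x : EuclideanSpace 𝕜 ι}
    (hx : x ∈ eigenspace (toEuclideanLin A) μ) : A *ᵥ ofLp x = μ • ofLp x :=
  congrArg ofLp (mem_eigenspace_iff.mp hx)

end General

section Flip

variable {n : ℕ}

theorem flipMatrix_eq_permMatrix : flipMatrix n = Fin.revPerm.permMatrix ℝ := by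
  ext i j
  simp only [flipMatrix, of_apply, PEquiv.toMatrix_apply, Equiv.toPEquiv_apply,
    Option.mem_some_iff, Fin.revPerm_apply, Fin.ext_iff, Fin.val_rev]
  congr 1
  grind

theorem flipMatrix_mulVec (x : Fin n → ℝ) : flipMatrix n *ᵥ x = x ∘ Fin.rev := by
  rw [flipMatrix_eq_permMatrix, permMatrix_mulVec]
  rfl

theorem flipMatrix_mul_self : flipMatrix n * flipMatrix n = 1 := by
  rw [flipMatrix_eq_permMatrix, ← permMatrix_mul,
    show Fin.revPerm * Fin.revPerm = 1 from Equiv.ext Fin.rev_rev, permMatrix_one]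

theorem toEuclideanLin_flipMatrix_mul_self :
    toEuclideanLin (flipMatrix n) * toEuclideanLin (flipMatrix n) = 1 := by
  rw [Module.End.mul_eq_comp, ← toLpLin_mul_same, flipMatrix_mul_self, toLpLin_one]
  rfl

theorem isHermitian_flipMatrix : (flipMatrix n).IsHermitian := by
  rw [IsHermitian, flipMatrix_eq_permMatrix, conjTranspose_permMatrix]
  rfl

theorem commute_toEuclideanLin_flipMatrix {T : Matrix (Fin n) (Fin n) ℝ}
    (hT : flipMatrix n * T * flipMatrix n = T) :
    Commute (toEuclideanLin (flipMatrix n)) (toEuclideanLin T) := by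
  have : Commute (flipMatrix n) T := calc
    flipMatrix n * T = flipMatrix n * (flipMatrix n * T * flipMatrix n) := by rw [hT]
    _ = T * flipMatrix n := by rw [← mul_assoc, ← mul_assoc, flipMatrix_mul_self, one_mul]
  exact this.map (toLpLinAlgEquiv 2)

theorem mem_eigenspace_flipMatrix_iff {ε : ℝ} {x : EuclideanSpace ℝ (Fin n)} :
    x ∈ eigenspace (toEuclideanLin (flipMatrix n)) ε ↔ ∀ i, x i.rev = ε * x i := by
  rw [mem_eigenspace_iff, toLpLin_apply, flipMatrix_mulVec, WithLp.ext_iff, funext_iff]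
  rfl

theorem eq_zero_of_mem_eigenspace_flipMatrix_one {x : EuclideanSpace ℝ (Fin n)}
    (hx : x ∈ eigenspace (toEuclideanLin (flipMatrix n)) 1)
    (h0 : ∀ k : Fin ((n + 1) / 2), x (Fin.castLE (by omega) k) = 0) : x = 0 := by
  rw [mem_eigenspace_flipMatrix_iff] at hx
  ext i
  by_cases hi : i.val < (n + 1) / 2
  · exact h0 ⟨i, hi⟩
  · have : x i.rev = 0 := h0 ⟨i.rev, by simp [Fin.val_rev]; omega⟩
    rwa [hx, one_mul] at this

theorem eq_zero_of_mem_eigenspace_flipMatrix_neg_one {x : EuclideanSpace ℝ (Fin n)}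
    (hx : x ∈ eigenspace (toEuclideanLin (flipMatrix n)) (-1))
    (h0 : ∀ k : Fin (n / 2), x (Fin.castLE (by omega) k) = 0) : x = 0 := by
  rw [mem_eigenspace_flipMatrix_iff] at hx
  ext i
  by_cases hi : i.val < n / 2
  · exact h0 ⟨i, hi⟩
  simp only [PiLp.zero_apply]
  by_cases hr : i.rev.val < n / 2
  · have : x i.rev = 0 := h0 ⟨i.rev, hr⟩
    linarith [hx i]
  · -- `i` is the middle coordinate of an odd-length vector
    have hfix : i.rev = i := by ext; simp [Fin.val_rev] at hr ⊢; omega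
    linarith [hfix ▸ hx i]

theorem finrank_eigenspace_flipMatrix :
    finrank ℝ (eigenspace (toEuclideanLin (flipMatrix n)) 1) = (n + 1) / 2 ∧
      finrank ℝ (eigenspace (toEuclideanLin (flipMatrix n)) (-1)) = n / 2 := by
  have hsym := Submodule.finrank_le_card_of_forall_apply_eq_zero _ _
    fun x => eq_zero_of_mem_eigenspace_flipMatrix_one (n := n) (x := x)
  have hskew := Submodule.finrank_le_card_of_forall_apply_eq_zero _ _
    fun x => eq_zero_of_mem_eigenspace_flipMatrix_neg_one (n := n) (x := x)
  have hsum := Submodule.finrank_add_le_finrank_add_finrank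
    (eigenspace (toEuclideanLin (flipMatrix n)) 1) (eigenspace (toEuclideanLin (flipMatrix n)) (-1))
  rw [eigenspace_one_sup_eigenspace_neg_one toEuclideanLin_flipMatrix_mul_self, finrank_top,
    finrank_euclideanSpace_fin] at hsum
  simp only [Fintype.card_fin] at hsym hskew
  omega

theorem exists_orthonormal_eigenvectors_of_centrosymmetric {T : Matrix (Fin n) (Fin n) ℝ}
    (hsymm : Tᵀ = T) (hcentro : flipMatrix n * T * flipMatrix n = T) :
    ∃ (v : Fin ((n + 1) / 2) ⊕ Fin (n / 2) → EuclideanSpace ℝ (Fin n))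
      (μ : Fin ((n + 1) / 2) ⊕ Fin (n / 2) → ℝ), Orthonormal ℝ v ∧
      (∀ i, v i ∈ eigenspace (toEuclideanLin T) (μ i)) ∧
      (∀ k, v (.inl k) ∈ eigenspace (toEuclideanLin (flipMatrix n)) 1) ∧
      ∀ k, v (.inr k) ∈ eigenspace (toEuclideanLin (flipMatrix n)) (-1) := by
  have hT : (toEuclideanLin T).IsSymmetric := isSymmetric_toEuclideanLin_iff.mpr
    (by rwa [IsHermitian, conjTranspose_eq_transpose_of_trivial])
  have hY : (toEuclideanLin (flipMatrix n)).IsSymmetric :=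
    isSymmetric_toEuclideanLin_iff.mpr isHermitian_flipMatrix
  have hcomm := commute_toEuclideanLin_flipMatrix hcentro
  obtain ⟨hp, hq⟩ := finrank_eigenspace_flipMatrix (n := n)
  obtain ⟨v, μ, hv, hTv, hsym, hskew⟩ := hT.exists_orthonormal_eigenvectors_sum
    (hY.orthogonalFamily_eigenspaces.isOrtho (by norm_num : (1 : ℝ) ≠ -1))
    (fun _ hx => mapsTo_genEigenspace_of_comm hcomm 1 1 hx)
    (fun _ hx => mapsTo_genEigenspace_of_comm hcomm (-1) 1 hx) hp hq
  exact ⟨v, μ, hv, fun i => mem_eigenspace_iff.mpr (hTv i), hsym, hskew⟩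

end Flip

/-- a real symmetric centrosymmetric matrix admits an orthonormal
eigenvector basis of `ℝⁿ` in which `⌈n/2⌉` vectors are symmetric (`Y v = v`) and
the other `⌊n/2⌋` are skew-symmetric (`Y v = -v`). -/
theorem stmt6 (n : ℕ) (T : Matrix (Fin n) (Fin n) ℝ)
    (hsymm : Tᵀ = T) (hcentro : flipMatrix n * T * flipMatrix n = T) :
    ∃ (v : Fin n → Fin n → ℝ) (μ : Fin n → ℝ) (s : Finset (Fin n)),
      s.card = (n + 1) / 2 ∧
      (∀ i j, v i ⬝ᵥ v j = if i = j then 1 else 0) ∧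
      (∀ i, T.mulVec (v i) = μ i • v i) ∧
      (∀ i ∈ s, (flipMatrix n).mulVec (v i) = v i) ∧
      (∀ i ∉ s, (flipMatrix n).mulVec (v i) = -v i) := by
  obtain ⟨v, μ, hv, hTv, hsym, hskew⟩ :=
    exists_orthonormal_eigenvectors_of_centrosymmetric hsymm hcentro
  let e : Fin ((n + 1) / 2) ⊕ Fin (n / 2) ≃ Fin n := finSumFinEquiv.trans (finCongr (by omega))
  refine ⟨fun i => ofLp (v (e.symm i)), fun i => μ (e.symm i),
    Finset.univ.map (Function.Embedding.inl.trans e.toEmbedding), by simp, fun i j => ?_,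
    fun i => mulVec_ofLp_eq_smul_of_mem_eigenspace (hTv _), ?_, ?_⟩
  · simpa [EuclideanSpace.inner_eq_star_dotProduct, eq_comm] using
      orthonormal_iff_ite.mp hv (e.symm j) (e.symm i)
  · intro i hi
    obtain ⟨k, -, rfl⟩ := Finset.mem_map.mp hi
    simpa using mulVec_ofLp_eq_smul_of_mem_eigenspace (hsym k)
  · intro i hi
    obtain ⟨k, hk⟩ : ∃ k, e.symm i = .inr k := by
      rcases h : e.symm i with k | k
      · exact absurd (Finset.mem_map.mpr ⟨k, Finset.mem_univ _, by simp [← h]⟩) hi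
      · exact ⟨k, rfl⟩
    simpa [hk] using mulVec_ofLp_eq_smul_of_mem_eigenspace (hskew k)
end

section
/- Let T_n be the n×n lower bidiagonal Toeplitz matrix with 1 on the diagonal and −1 on the first subdiagonal (symbol f(θ) = 1 − e^{iθ}). Then the eigenvalues of the symmetric matrix H_n = Y_n T_n are exactly (−1)^{j+1} · 2sin((j−1/2)π/(2n+1)) for j = 1,...,n; in particular the singular values of T_n are 2sin((j−1/2)π/(2n+1)), j = 1,...,n. -/
open Matrix Polynomial Real

/-!
`H = Y T` is `T` with its rows reversed; it is symmetric, so `Tᵀ T = Hᵀ H = H²`.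
On vectors `i ↦ V (i + 1)` with `V 0 = 0` the matrix `T` acts as the backward difference of `V`.
Take `V k = sin (2 k θ)` with `θ = (2j+1)π / (2(2n+1))`: since `(2n+1) θ = jπ + π/2`, reversing
the index reflects the sine about `jπ + π/2`, and the sum-to-product formula shows that
`H` has the eigenvalue `(-1)^j · 2 sin θ` on this vector. As `0 < θ < π/2` increases with `j`,
these `n` eigenvalues are distinct, hence they are all the roots of the characteristic
polynomial of `H`; their squares, again distinct, are those of `H² = Tᵀ T`.
-/

namespace Matrix

theorem isRoot_charpoly_of_mulVec_eq_smul {R ι : Type*} [CommRing R] [IsDomain R] [Fintype ι]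
    [DecidableEq ι] {A : Matrix ι ι R} {v : ι → R} {μ : R} (hv : v ≠ 0) (h : A *ᵥ v = μ • v) :
    A.charpoly.IsRoot μ := by
  rw [IsRoot, eval_charpoly, ← exists_mulVec_eq_zero_iff]
  exact ⟨v, hv, by simp [sub_mulVec, h]⟩

theorem charpoly_eq_prod_X_sub_C_of_injective {K ι : Type*} [Field K] [Fintype ι]
    [DecidableEq ι] (A : Matrix ι ι K) {f : ι → K} (hf : Function.Injective f)
    (hroot : ∀ i, A.charpoly.IsRoot (f i)) : A.charpoly = ∏ i, (X - C (f i)) :=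
  eq_of_monic_of_dvd_of_natDegree_le (monic_prod_X_sub_C f _) A.charpoly_monic
    (Fintype.prod_dvd_of_coprime (pairwise_coprime_X_sub_C hf) fun i ↦
      dvd_iff_isRoot.mpr (hroot i))
    (by rw [charpoly_natDegree_eq_dim, natDegree_finsetProd_X_sub_C_eq_card, Finset.card_univ])

end Matrix

theorem Real.sin_sub_sin_reflect (j : ℕ) (a θ : ℝ) :
    sin (j * π + π / 2 - θ + a) - sin (j * π + π / 2 - θ - a) =
      (-1) ^ j * (2 * sin a) * sin θ := by
  have hcos : cos ((j * π + π / 2 - θ + a + (j * π + π / 2 - θ - a)) / 2) = (-1) ^ j * sin θ := by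
    rw [← cos_pi_div_two_sub, ← cos_add_nat_mul_pi]
    ring_nf
  rw [sin_sub_sin, hcos, show (j * π + π / 2 - θ + a - (j * π + π / 2 - θ - a)) / 2 = a by ring]
  ring

section

variable {n : ℕ}

theorem flipMatrix_apply (i j : Fin n) : flipMatrix n i j = if j = i.rev then 1 else 0 := by
  simp only [flipMatrix, of_apply, Fin.ext_iff, Fin.val_rev]
  congr 1
  exact propext (by omega)

theorem flipMatrix_mul {m : Type*} (M : Matrix (Fin n) m ℝ) :
    flipMatrix n * M = M.submatrix Fin.rev id := by
  ext i j
  simp [mul_apply, flipMatrix_apply]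

theorem transpose_mul_self_flipMatrix_mul {m : Type*} [Fintype m] (M : Matrix (Fin n) m ℝ) :
    (flipMatrix n * M)ᵀ * (flipMatrix n * M) = Mᵀ * M := by
  rw [flipMatrix_mul, transpose_submatrix]
  exact submatrix_mul_equiv Mᵀ M id Fin.revPerm id

def diffMatrix (R : Type*) [Ring R] (n : ℕ) : Matrix (Fin n) (Fin n) R :=
  of fun s t ↦ if (s : ℕ) = t then 1 else if (s : ℕ) = t + 1 then -1 else 0

theorem diffMatrix_mulVec {R : Type*} [Ring R] (V : ℕ → R) (hV : V 0 = 0) :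
    diffMatrix R n *ᵥ (fun i : Fin n ↦ V (i + 1 : ℕ)) =
      fun s : Fin n ↦ V (s + 1 : ℕ) - V s := by
  ext s
  have hsplit (k : ℕ) :
      (if (s : ℕ) = k then 1 else if (s : ℕ) = k + 1 then -1 else 0) * V (k + 1) =
        (if (s : ℕ) = k then V (k + 1) else 0) - (if (s : ℕ) = k + 1 then V (k + 1) else 0) := by
    split_ifs <;> first | omega | simp
  -- the subdiagonal sum is the diagonal one shifted by an index, up to the term `V 0 = 0`
  have hshift := Finset.sum_range_succ' (fun k ↦ if (s : ℕ) = k then V k else 0) n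
  simp only [mulVec, dotProduct, diffMatrix, of_apply, hsplit, Finset.sum_sub_distrib,
    Fin.sum_univ_eq_sum_range (fun k ↦ if (s : ℕ) = k then V (k + 1) else 0),
    Fin.sum_univ_eq_sum_range (fun k ↦ if (s : ℕ) = k + 1 then V (k + 1) else 0)]
  simp only [Finset.sum_ite_eq, Finset.mem_range, s.isLt, Nat.lt_succ_of_lt, if_true, hV,
    ite_self, add_zero] at hshift ⊢
  rw [← hshift]

theorem flipMatrix_mul_diffMatrix_transpose :
    (flipMatrix n * diffMatrix ℝ n)ᵀ = flipMatrix n * diffMatrix ℝ n := by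
  ext i j
  simp only [flipMatrix_mul, transpose_apply, submatrix_apply, id, diffMatrix, of_apply,
    Fin.val_rev]
  have := i.isLt
  have := j.isLt
  split_ifs <;> first | rfl | omega

noncomputable def singularAngle (n j : ℕ) : ℝ := (2 * j + 1) * π / (2 * (2 * n + 1))

theorem two_mul_add_one_mul_singularAngle (n j : ℕ) :
    (2 * n + 1) * singularAngle n j = j * π + π / 2 := by
  unfold singularAngle
  field_simp

theorem singularAngle_pos (n j : ℕ) : 0 < singularAngle n j := by
  unfold singularAngle
  positivity

theorem two_mul_singularAngle_lt_pi {j : ℕ} (hj : j < n) : 2 * singularAngle n j < π := by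
  have hlt : (2 * j + 1 : ℝ) < 2 * n + 1 := by exact_mod_cast (by omega : 2 * j + 1 < 2 * n + 1)
  unfold singularAngle
  rw [← sub_pos]
  field_simp
  nlinarith [pi_pos]

theorem sin_singularAngle_pos {j : ℕ} (hj : j < n) : 0 < sin (singularAngle n j) :=
  sin_pos_of_pos_of_lt_pi (singularAngle_pos n j)
    (by linarith [two_mul_singularAngle_lt_pi hj, singularAngle_pos n j])

theorem strictMono_sin_singularAngle : StrictMono fun j : Fin n ↦ sin (singularAngle n j) := by
  intro j k hjk
  have mem (i : Fin n) : singularAngle n i ∈ Set.Icc (-(π / 2)) (π / 2) :=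
    ⟨by linarith [singularAngle_pos n i, pi_pos], by linarith [two_mul_singularAngle_lt_pi i.isLt]⟩
  refine strictMonoOn_sin (mem j) (mem k) ?_
  unfold singularAngle
  gcongr
  exact_mod_cast hjk

theorem injective_neg_one_pow_mul_sin_singularAngle :
    Function.Injective fun j : Fin n ↦ (-1 : ℝ) ^ (j : ℕ) * (2 * sin (singularAngle n j)) := by
  intro j k h
  apply strictMono_sin_singularAngle.injective
  have habs := congrArg abs h
  simp only [abs_mul, abs_pow, abs_neg, abs_one, one_pow, one_mul, abs_two,
    abs_of_pos (sin_singularAngle_pos j.isLt), abs_of_pos (sin_singularAngle_pos k.isLt)] at habs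
  linarith

theorem injective_sq_sin_singularAngle :
    Function.Injective fun j : Fin n ↦ (2 * sin (singularAngle n j)) ^ 2 := by
  intro j k h
  apply strictMono_sin_singularAngle.injective
  have hj := sin_singularAngle_pos j.isLt
  have hk := sin_singularAngle_pos k.isLt
  rw [sq_eq_sq₀ (by positivity) (by positivity)] at h
  linarith

noncomputable def singularVec (n j : ℕ) : Fin n → ℝ :=
  fun i ↦ sin (2 * ((i + 1 : ℕ) : ℝ) * singularAngle n j)

theorem singularVec_ne_zero {j : ℕ} (hj : j < n) : singularVec n j ≠ 0 := by
  intro h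
  have h0 : sin (2 * singularAngle n j) = 0 := by
    simpa [singularVec] using congrFun h ⟨0, by omega⟩
  have hpos : 0 < sin (2 * singularAngle n j) :=
    sin_pos_of_pos_of_lt_pi (by linarith [singularAngle_pos n j]) (two_mul_singularAngle_lt_pi hj)
  exact hpos.ne' h0

theorem mulVec_singularVec (j : ℕ) :
    (flipMatrix n * diffMatrix ℝ n) *ᵥ singularVec n j =
      ((-1) ^ j * (2 * sin (singularAngle n j))) • singularVec n j := by
  ext i
  have hrev : (i.rev : ℝ) = n - 1 - i := by
    rw [Fin.val_rev, Nat.cast_sub (by omega)]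
    push_cast
    ring
  set θ := 2 * ((i + 1 : ℕ) : ℝ) * singularAngle n j
  have hshift := two_mul_add_one_mul_singularAngle n j
  calc ((flipMatrix n * diffMatrix ℝ n) *ᵥ singularVec n j) i
      = sin (2 * ((i.rev + 1 : ℕ) : ℝ) * singularAngle n j) -
          sin (2 * (i.rev : ℕ) * singularAngle n j) := by
        rw [flipMatrix_mul]
        exact congrFun (diffMatrix_mulVec (fun k : ℕ ↦ sin (2 * (k : ℝ) * singularAngle n j))
          (by simp)) i.rev
    _ = sin (j * π + π / 2 - θ + singularAngle n j) -
          sin (j * π + π / 2 - θ - singularAngle n j) := by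
        congr 2 <;> push_cast [hrev, θ] <;> linear_combination hshift
    _ = ((-1) ^ j * (2 * sin (singularAngle n j))) * singularVec n j i :=
        sin_sub_sin_reflect j _ θ

theorem mul_self_mulVec_singularVec (j : ℕ) :
    (flipMatrix n * diffMatrix ℝ n * (flipMatrix n * diffMatrix ℝ n)) *ᵥ singularVec n j =
      (2 * sin (singularAngle n j)) ^ 2 • singularVec n j := by
  rw [← mulVec_mulVec, mulVec_singularVec, mulVec_smul, mulVec_singularVec, smul_smul]
  congr 1
  rw [mul_mul_mul_comm, ← pow_add, ← two_mul, pow_mul, neg_one_sq, one_pow, one_mul, sq]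

end

/-- for the lower bidiagonal Toeplitz matrix `T_n` with `1` on the
diagonal and `−1` on the first subdiagonal (symbol `1 − e^{iθ}`), the eigenvalues
of `H_n = Y_n T_n` are exactly `(−1)^{j+1}·2sin((j−1/2)π/(2n+1))`, `j = 1,…,n`
(via the characteristic polynomial); in particular the singular values of `T_n`
are `2sin((j−1/2)π/(2n+1))`. -/
theorem stmt14 (n : ℕ) (T : Matrix (Fin n) (Fin n) ℝ)
    (hT : ∀ s t : Fin n, T s t =
      if (s : ℕ) = (t : ℕ) then 1 else if (s : ℕ) = (t : ℕ) + 1 then -1 else 0) :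
    (flipMatrix n * T)ᵀ = flipMatrix n * T ∧
    (flipMatrix n * T).charpoly =
      ∏ j : Fin n, (X - C ((-1 : ℝ) ^ (j : ℕ) *
        (2 * Real.sin (((2 * (j : ℕ) + 1) * π) / (2 * (2 * n + 1)))))) ∧
    (Tᵀ * T).charpoly =
      ∏ j : Fin n, (X - C ((2 * Real.sin (((2 * (j : ℕ) + 1) * π) / (2 * (2 * n + 1)))) ^ 2)) := by
  obtain rfl : T = diffMatrix ℝ n := Matrix.ext hT
  have hsymm := flipMatrix_mul_diffMatrix_transpose (n := n)
  refine ⟨hsymm, ?_, ?_⟩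
  · exact charpoly_eq_prod_X_sub_C_of_injective _ injective_neg_one_pow_mul_sin_singularAngle
      fun j ↦ isRoot_charpoly_of_mulVec_eq_smul (singularVec_ne_zero j.isLt) (mulVec_singularVec j)
  · rw [← transpose_mul_self_flipMatrix_mul, hsymm]
    exact charpoly_eq_prod_X_sub_C_of_injective _ injective_sq_sin_singularAngle
      fun j ↦ isRoot_charpoly_of_mulVec_eq_smul (singularVec_ne_zero j.isLt)
        (mul_self_mulVec_singularVec j)
end

section
/- Let g_n : [0,1] → ℝ be a sequence of non-decreasing functions and g : (0,1) → ℝ non-decreasing, and let ω_n → ∞ be positive integers such that for every continuous compactly supported F : ℝ → ℝ, (1/ω_n) Σ_{ℓ=0}^{ω_n} F(g_n(ℓ/ω_n)) → ∫_0^1 F(g(y)) dy. Then g_n(y) → g(y) at every continuity point y ∈ (0,1) of g. -/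
/-!
Test the convergence of the empirical distributions of the samples `g n (ℓ / ω n)` against a
continuous cut-off `F` which is `1` on `[G c, b]` and `0` on `[b', ∞)`, where `b < b'` and
`G ≤ b` on `(0, u)` for some `u > y`. By monotonicity of `G`, the limit `∫₀¹ F ∘ G` is at least
`u - c > y`. If `g n y ≥ b'`, monotonicity of `g n` kills all samples with `ℓ / ω n ≥ y`, so the
normalized sum is at most `y + 1 / ω n`: hence eventually `g n y < b'`. Continuity of `G` at `y`
provides such `u` for every `b' > G y`, and the lower bound follows by reflecting everything
through `t ↦ 1 - t`, `x ↦ -x`.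
-/

open Filter Topology MeasureTheory Set

def SamplesDistributedAs (g : ℕ → ℝ → ℝ) (ω : ℕ → ℕ) (G : ℝ → ℝ) : Prop :=
  ∀ F : ℝ → ℝ, Continuous F → HasCompactSupport F →
    Tendsto (fun n => (1 / (ω n : ℝ)) *
        ∑ ℓ ∈ Finset.range (ω n + 1), F (g n ((ℓ : ℝ) / (ω n : ℝ))))
      atTop (𝓝 (∫ y in Set.Ioo (0 : ℝ) 1, F (G y)))

lemma Finset.sum_le_natCeil_of_le_one {s : Finset ℕ} {f : ℕ → ℝ} {x : ℝ}
    (h1 : ∀ ℓ ∈ s, f ℓ ≤ 1) (h0 : ∀ ℓ ∈ s, x ≤ ℓ → f ℓ = 0) :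
    ∑ ℓ ∈ s, f ℓ ≤ ⌈x⌉₊ := by
  have hsub : s.filter (fun ℓ : ℕ => (ℓ : ℝ) < x) ⊆ Finset.range ⌈x⌉₊ := fun ℓ hℓ =>
    Finset.mem_range.2 (Nat.lt_ceil.2 (Finset.mem_filter.1 hℓ).2)
  calc ∑ ℓ ∈ s, f ℓ = ∑ ℓ ∈ s.filter (fun ℓ : ℕ => (ℓ : ℝ) < x), f ℓ :=
        (Finset.sum_filter_of_ne fun ℓ hℓ hf => not_le.1 fun h => hf (h0 ℓ hℓ h)).symm
    _ ≤ (s.filter (fun ℓ : ℕ => (ℓ : ℝ) < x)).card • (1 : ℝ) :=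
        Finset.sum_le_card_nsmul _ _ _ fun ℓ hℓ => h1 ℓ (Finset.mem_filter.1 hℓ).1
    _ ≤ ⌈x⌉₊ := by
        simpa using Finset.card_le_card hsub

lemma one_div_mul_sum_range_succ_le {N : ℕ} (hN : 0 < N) {y : ℝ} (hy : 0 ≤ y) {f : ℕ → ℝ}
    (h1 : ∀ ℓ, f ℓ ≤ 1) (h0 : ∀ ℓ ≤ N, y ≤ ℓ / N → f ℓ = 0) :
    1 / (N : ℝ) * ∑ ℓ ∈ Finset.range (N + 1), f ℓ ≤ y + 1 / N := by
  have hN' : (0 : ℝ) < N := Nat.cast_pos.2 hN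
  have hsum : ∑ ℓ ∈ Finset.range (N + 1), f ℓ ≤ ⌈y * N⌉₊ :=
    Finset.sum_le_natCeil_of_le_one (fun ℓ _ => h1 ℓ) fun ℓ hℓ hyℓ =>
      h0 ℓ (Nat.lt_succ_iff.1 (Finset.mem_range.1 hℓ)) ((le_div_iff₀ hN').2 hyℓ)
  calc 1 / (N : ℝ) * ∑ ℓ ∈ Finset.range (N + 1), f ℓ ≤ 1 / N * (y * N + 1) := by
        gcongr
        exact hsum.trans (Nat.ceil_lt_add_one (by positivity)).le
    _ = y + 1 / N := by field_simp

lemma le_setIntegral_of_eqOn_one {α : Type*} [MeasurableSpace α] {μ : Measure α}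
    {f : α → ℝ} {s t : Set α} (hf : IntegrableOn f s μ) (hf0 : ∀ x, 0 ≤ f x)
    (hts : t ⊆ s) (ht : EqOn f 1 t) (htm : MeasurableSet t) :
    μ.real t ≤ ∫ x in s, f x ∂μ := by
  calc μ.real t = ∫ x in t, f x ∂μ := by
        rw [setIntegral_congr_fun htm ht, Pi.one_def, setIntegral_const, smul_eq_mul, mul_one]
    _ ≤ ∫ x in s, f x ∂μ :=
        setIntegral_mono_set hf (Eventually.of_forall hf0) hts.eventuallyLE

lemma integrableOn_Ioo_comp_of_monotoneOn {F G : ℝ → ℝ} (hF : Continuous F)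
    (hF01 : ∀ x, F x ∈ Icc (0 : ℝ) 1) (hG : MonotoneOn G (Ioo 0 1)) :
    IntegrableOn (fun x => F (G x)) (Ioo 0 1) := by
  refine ⟨hF.comp_aestronglyMeasurable
      (aemeasurable_restrict_of_monotoneOn measurableSet_Ioo hG).aestronglyMeasurable,
    .restrict_of_bounded (C := 1) measure_Ioo_lt_top (Eventually.of_forall fun x => ?_)⟩
  rw [Real.norm_of_nonneg (hF01 _).1]
  exact (hF01 _).2

lemma integral_Ioo_comp_add_sub {E : Type*} [NormedAddCommGroup E] [NormedSpace ℝ E]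
    {a b : ℝ} (hab : a ≤ b) (f : ℝ → E) :
    ∫ t in Ioo a b, f (a + b - t) = ∫ t in Ioo a b, f t := by
  simp only [← integral_Ioc_eq_integral_Ioo, ← intervalIntegral.integral_of_le hab]
  simp [intervalIntegral.integral_comp_sub_left f (a + b)]

lemma MonotoneOn.exists_forall_Ioo_le {G : ℝ → ℝ} (hG : MonotoneOn G (Ioo 0 1)) {y b : ℝ}
    (hy : y ∈ Ioo 0 1) (hcont : ContinuousWithinAt G (Ioo 0 1) y) (hb : G y < b) :
    ∃ u, y < u ∧ u ≤ 1 ∧ ∀ x ∈ Ioo 0 u, G x ≤ b := by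
  have hnhds : ∀ᶠ x in 𝓝 y, x ∈ Ioo 0 1 ∧ G x < b := by
    rw [← nhdsWithin_eq_nhds.2 (Ioo_mem_nhds hy.1 hy.2)]
    exact eventually_mem_nhdsWithin.and (hcont.eventually (eventually_lt_nhds hb))
  obtain ⟨u, hyu, hu⟩ := mem_nhdsGT_iff_exists_Ioc_subset.1 (nhdsWithin_le_nhds hnhds)
  refine ⟨u, hyu, (hu ⟨hyu, le_rfl⟩).1.2.le, fun x hx => ?_⟩
  rcases le_or_gt x y with hxy | hxy
  · exact (hG ⟨hx.1, hxy.trans_lt hy.2⟩ hy hxy).trans hb.le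
  · exact (hu ⟨hxy, hx.2.le⟩).2.le

lemma MonotoneOn.neg_comp_one_sub {f : ℝ → ℝ} {s : Set ℝ} (hf : MonotoneOn f s)
    (hs : ∀ t ∈ s, 1 - t ∈ s) : MonotoneOn (fun t => -f (1 - t)) s :=
  fun a ha b hb hab => neg_le_neg (hf (hs b hb) (hs a ha) (by linarith))

namespace SamplesDistributedAs

variable {g : ℕ → ℝ → ℝ} {ω : ℕ → ℕ} {G : ℝ → ℝ}

lemma eventually_lt_of_forall_Ioo_le (h : SamplesDistributedAs g ω G)
    (hω : Tendsto ω atTop atTop) (hmono : ∀ n, MonotoneOn (g n) (Icc 0 1))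
    (hG : MonotoneOn G (Ioo 0 1)) {y u b b' : ℝ} (hy : 0 ≤ y) (hyu : y < u) (hu : u ≤ 1)
    (hGb : ∀ x ∈ Ioo 0 u, G x ≤ b) (hbb' : b < b') :
    ∀ᶠ n in atTop, g n y < b' := by
  obtain ⟨c, hc0, hcu⟩ : ∃ c, 0 < c ∧ c < u - y := ⟨(u - y) / 2, by linarith, by linarith⟩
  obtain ⟨F, hF1, hF0, hFsupp, hF01⟩ := exists_continuous_one_zero_of_isCompact
    (isCompact_Icc (a := G c) (b := b)) isClosed_Ici
    (disjoint_left.2 fun x hx hx' => not_le.2 (hx.2.trans_lt hbb') hx')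
  have hFG : EqOn (fun x => F (G x)) 1 (Ioo c u) := fun x hx =>
    hF1 ⟨hG ⟨hc0, by linarith⟩ ⟨hc0.trans hx.1, hx.2.trans_le hu⟩ hx.1.le,
      hGb x ⟨hc0.trans hx.1, hx.2⟩⟩
  have hmass : y < ∫ x in Ioo 0 1, F (G x) := by
    have := le_setIntegral_of_eqOn_one
      (integrableOn_Ioo_comp_of_monotoneOn F.continuous hF01 hG) (fun x => (hF01 _).1)
      (Ioo_subset_Ioo hc0.le hu) hFG measurableSet_Ioo
    rw [Real.volume_real_Ioo_of_le (by linarith)] at this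
    linarith
  have hlim : Tendsto (fun n => 1 / (ω n : ℝ) *
      ∑ ℓ ∈ Finset.range (ω n + 1), F (g n ((ℓ : ℝ) / (ω n : ℝ))) - 1 / (ω n : ℝ))
      atTop (𝓝 ((∫ x in Ioo 0 1, F (G x)) - 0)) :=
    (h F F.continuous hFsupp).sub (tendsto_one_div_atTop_nhds_zero_nat.comp hω)
  filter_upwards [hlim.eventually (eventually_gt_nhds (by simpa using hmass)),
    hω.eventually_gt_atTop 0] with n hn hωn
  by_contra! hgn
  have := one_div_mul_sum_range_succ_le hωn hy (f := fun ℓ => F (g n ((ℓ : ℝ) / (ω n : ℝ))))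
    (fun ℓ => (hF01 _).2) fun ℓ hℓ hyℓ => hF0 (hgn.trans (hmono n ⟨hy, hyu.le.trans hu⟩
      ⟨by positivity, div_le_one_of_le₀ (by exact_mod_cast hℓ) (Nat.cast_nonneg _)⟩ hyℓ))
  linarith

lemma eventually_lt (h : SamplesDistributedAs g ω G)
    (hω : Tendsto ω atTop atTop) (hmono : ∀ n, MonotoneOn (g n) (Icc 0 1))
    (hG : MonotoneOn G (Ioo 0 1)) {y b : ℝ} (hy : y ∈ Ioo 0 1)
    (hcont : ContinuousWithinAt G (Ioo 0 1) y) (hb : G y < b) :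
    ∀ᶠ n in atTop, g n y < b := by
  obtain ⟨b₀, hb₀, hb₀b⟩ := exists_between hb
  obtain ⟨u, hyu, hu, hGu⟩ := hG.exists_forall_Ioo_le hy hcont hb₀
  exact h.eventually_lt_of_forall_Ioo_le hω hmono hG hy.1.le hyu hu hGu hb₀b

lemma reflect (h : SamplesDistributedAs g ω G) (hω : ∀ n, 0 < ω n) :
    SamplesDistributedAs (fun n t => -g n (1 - t)) ω (fun t => -G (1 - t)) := by
  intro F hF hFsupp
  have hlim := h (fun s => F (-s)) (hF.comp continuous_neg)
    (hFsupp.comp_homeomorph (Homeomorph.neg ℝ))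
  have hint := integral_Ioo_comp_add_sub zero_le_one fun t => F (-G t)
  rw [zero_add] at hint
  beta_reduce
  rw [hint]
  refine hlim.congr fun n => congrArg _ ((Finset.sum_range_reflect _ _).symm.trans
    (Finset.sum_congr rfl fun ℓ hℓ => ?_))
  have hωn : (ω n : ℝ) ≠ 0 := Nat.cast_ne_zero.2 (hω n).ne'
  rw [Nat.add_sub_cancel, Nat.cast_sub (Nat.lt_succ_iff.1 (Finset.mem_range.1 hℓ)), sub_div,
    div_self hωn]

end SamplesDistributedAs

/-- if `g_n : [0,1] → ℝ` are non-decreasing, `g : (0,1) → ℝ` is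
non-decreasing, `ω_n → ∞` are positive integers, and for every continuous compactly
supported `F` one has `(1/ω_n) Σ_{ℓ=0}^{ω_n} F(g_n(ℓ/ω_n)) → ∫₀¹ F(g(y)) dy`,
then `g_n(y) → g(y)` at every continuity point `y ∈ (0,1)` of `g`. -/
theorem stmt17 (g : ℕ → ℝ → ℝ) (G : ℝ → ℝ) (ω : ℕ → ℕ)
    (hωpos : ∀ n, 0 < ω n) (hω : Tendsto ω atTop atTop)
    (hmono : ∀ n, MonotoneOn (g n) (Set.Icc (0 : ℝ) 1))
    (hG : MonotoneOn G (Set.Ioo (0 : ℝ) 1))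
    (herg : ∀ F : ℝ → ℝ, Continuous F → HasCompactSupport F →
      Tendsto (fun n => (1 / (ω n : ℝ)) *
          ∑ ℓ ∈ Finset.range (ω n + 1), F (g n ((ℓ : ℝ) / (ω n : ℝ))))
        atTop (𝓝 (∫ y in Set.Ioo (0 : ℝ) 1, F (G y))))
    (y : ℝ) (hy : y ∈ Set.Ioo (0 : ℝ) 1)
    (hcont : ContinuousWithinAt G (Set.Ioo (0 : ℝ) 1) y) :
    Tendsto (fun n => g n y) atTop (𝓝 (G y)) := by
  have h : SamplesDistributedAs g ω G := herg
  have hIcc : ∀ t ∈ Icc (0 : ℝ) 1, 1 - t ∈ Icc (0 : ℝ) 1 :=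
    fun t ht => ⟨sub_nonneg.2 ht.2, sub_le_self _ ht.1⟩
  have hIoo : ∀ t ∈ Ioo (0 : ℝ) 1, 1 - t ∈ Ioo (0 : ℝ) 1 :=
    fun t ht => ⟨sub_pos.2 ht.2, sub_lt_self _ ht.1⟩
  refine tendsto_order.2 ⟨fun a ha => ?_, fun b hb => h.eventually_lt hω hmono hG hy hcont hb⟩
  have hcont' : ContinuousWithinAt (fun t => -G (1 - t)) (Ioo 0 1) (1 - y) :=
    (hcont.comp_of_eq (continuous_sub_left 1).continuousWithinAt hIoo (sub_sub_cancel 1 y)).neg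
  have hlt : -G (1 - (1 - y)) < -a := by rw [sub_sub_cancel]; exact neg_lt_neg ha
  simpa using (h.reflect hωpos).eventually_lt hω (fun n => (hmono n).neg_comp_one_sub hIcc)
    (hG.neg_comp_one_sub hIoo) (hIoo y hy) hcont' hlt
end
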